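/- arXiv:0708.2142 — 3 statements merged into one kernel-verified Lean document; each statement's English description precedes it below -/
import Mathlib

section
/- Let H be an (n−k)×n binary matrix with rows r_1,...,r_{n−k}, and consider the 2(n−k) vectors (r_i, 0) and (0, r_i) in the symplectic space (Z/2)^{2n}. The span of these vectors has the property that the dimension of the span minus the dimension of its radical equals 2·rank(H H^T). (Hence the CSS code built from H requires c = rank(H H^T) ebits.) -/
/-!
Let `U` be the row space of `H`; the span in question is `U × U`. As `symp` pairs the first
component of one vector with the second component of the other, `(a, b) ∈ U × U` lies in the
radical iff `a` and `b` are orthogonal to `U`, i.e. `H a = H b = 0`. So the radical is `W × W` with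
`W = ker H ⊓ U`, and rank–nullity for `H` restricted to `U` gives `dim U = dim W + dim H(U)`, where
`H(U)` is the column space of `H Hᵀ`.
-/

open Matrix BigOperators

def pdot {n : ℕ} (a b : Fin n → ZMod 2) : ZMod 2 := ∑ i, a i * b i

def symp {n : ℕ} (v w : (Fin n → ZMod 2) × (Fin n → ZMod 2)) : ZMod 2 :=
  pdot v.1 w.2 + pdot v.2 w.1

open Module Submodule

theorem Submodule.span_range_inl_union_range_inr {R M N ι κ : Type*} [Semiring R]
    [AddCommMonoid M] [Module R M] [AddCommMonoid N] [Module R N] (v : ι → M) (w : κ → N) :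
    span R ((Set.range fun i => (v i, (0 : N))) ∪ Set.range fun j => ((0 : M), w j)) =
      (span R (Set.range v)).prod (span R (Set.range w)) := by
  rw [← LinearMap.span_inl_union_inr, ← Set.range_comp, ← Set.range_comp]
  rfl

theorem Submodule.finrank_prod {K M N : Type*} [DivisionRing K] [AddCommGroup M] [Module K M]
    [AddCommGroup N] [Module K N] [FiniteDimensional K M] [FiniteDimensional K N]
    (p : Submodule K M) (q : Submodule K N) :
    finrank K (p.prod q) = finrank K p + finrank K q := by
  have hinj : Function.Injective (p.subtype.prodMap q.subtype) :=
    Prod.map_injective.mpr ⟨p.injective_subtype, q.injective_subtype⟩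
  rw [← Module.finrank_prod, ← LinearMap.finrank_range_of_inj hinj, LinearMap.range_prodMap,
    range_subtype, range_subtype]

theorem LinearMap.finrank_map_add_finrank_ker_inf {K V W : Type*} [DivisionRing K]
    [AddCommGroup V] [Module K V] [AddCommGroup W] [Module K W] [FiniteDimensional K V]
    (f : V →ₗ[K] W) (U : Submodule K V) :
    finrank K (U.map f) + finrank K (LinearMap.ker f ⊓ U : Submodule K V) = finrank K U := by
  have hker : (LinearMap.ker f).comap U.subtype = (LinearMap.ker f ⊓ U).comap U.subtype := by
    rw [comap_inf, comap_subtype_self, inf_top_eq]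
  rw [← (f.domRestrict U).finrank_range_add_finrank_ker, range_domRestrict, ker_domRestrict, hker,
    (comapSubtypeEquivOfLe inf_le_right).finrank_eq]

theorem Matrix.rank_mul_transpose_eq_finrank_map {K m n : Type*} [Field K] [Fintype m]
    [Fintype n] (A : Matrix m n K) :
    (A * Aᵀ).rank = finrank K ((span K (Set.range A)).map A.mulVecLin) := by
  rw [Matrix.rank, Matrix.mulVecLin_mul, LinearMap.range_comp, Matrix.range_mulVecLin]
  rfl

theorem Matrix.forall_mem_span_range_dotProduct_eq_zero_iff {R m n : Type*} [CommSemiring R]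
    [Fintype n] (A : Matrix m n R) (y : n → R) :
    (∀ x ∈ span R (Set.range A), y ⬝ᵥ x = 0) ↔ A *ᵥ y = 0 := by
  constructor
  · intro h
    funext i
    rw [mulVec, dotProduct_comm]
    exact h _ (subset_span ⟨i, rfl⟩)
  · intro h x hx
    have hspan : span R (Set.range A) ≤ LinearMap.ker (dotProductBilin R R y) := by
      rw [span_le]
      rintro _ ⟨i, rfl⟩
      simpa [mulVec, dotProduct_comm] using congrFun h i
    exact hspan hx

theorem symp_eq_dotProduct {n : ℕ} (v w : (Fin n → ZMod 2) × (Fin n → ZMod 2)) :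
    symp v w = v.1 ⬝ᵥ w.2 + v.2 ⬝ᵥ w.1 :=
  rfl

theorem forall_mem_prod_symp_eq_zero_iff {n : ℕ} (p q : Submodule (ZMod 2) (Fin n → ZMod 2))
    (v : (Fin n → ZMod 2) × (Fin n → ZMod 2)) :
    (∀ w ∈ p.prod q, symp v w = 0) ↔ (∀ d ∈ q, v.1 ⬝ᵥ d = 0) ∧ ∀ c ∈ p, v.2 ⬝ᵥ c = 0 := by
  simp only [symp_eq_dotProduct]
  constructor
  · intro h
    refine ⟨fun d hd => ?_, fun c hc => ?_⟩
    · simpa using h (0, d) ⟨p.zero_mem, hd⟩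
    · simpa using h (c, 0) ⟨hc, q.zero_mem⟩
  · rintro ⟨h₁, h₂⟩ ⟨c, d⟩ ⟨hc, hd⟩
    rw [h₁ d hd, h₂ c hc, add_zero]

theorem symp_radical_prod_span_range {m : Type*} {n : ℕ} (H : Matrix m (Fin n) (ZMod 2)) :
    {v | v ∈ (span (ZMod 2) (Set.range H)).prod (span (ZMod 2) (Set.range H)) ∧
        ∀ w ∈ (span (ZMod 2) (Set.range H)).prod (span (ZMod 2) (Set.range H)), symp v w = 0} =
      ((LinearMap.ker H.mulVecLin ⊓ span (ZMod 2) (Set.range H)).prod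
        (LinearMap.ker H.mulVecLin ⊓ span (ZMod 2) (Set.range H)) : Set _) := by
  ext v
  change _ ∧ _ ↔ _
  rw [forall_mem_prod_symp_eq_zero_iff, forall_mem_span_range_dotProduct_eq_zero_iff,
    forall_mem_span_range_dotProduct_eq_zero_iff]
  simp only [SetLike.mem_coe, mem_prod, mem_inf, LinearMap.mem_ker, mulVecLin_apply]
  tauto

/-- For the CSS symplectic subspace spanned by `(r_i, 0)` and `(0, r_i)` (the
rows of `H` placed on the Z- and X-sides), the dimension of the span minus the
dimension of its radical equals `2 · rank(H Hᵀ)`. -/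
theorem css_span_radical_rank (n k : ℕ)
    (H : Matrix (Fin (n - k)) (Fin n) (ZMod 2)) :
    ∃ V R : Submodule (ZMod 2) ((Fin n → ZMod 2) × (Fin n → ZMod 2)),
      V = Submodule.span (ZMod 2)
        ((Set.range fun i => ((H i, 0) : (Fin n → ZMod 2) × (Fin n → ZMod 2))) ∪
         (Set.range fun i => ((0, H i) : (Fin n → ZMod 2) × (Fin n → ZMod 2)))) ∧
      (R : Set ((Fin n → ZMod 2) × (Fin n → ZMod 2))) =
        {v | v ∈ V ∧ ∀ w ∈ V, symp v w = 0} ∧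
      Module.finrank (ZMod 2) V =
        Module.finrank (ZMod 2) R + 2 * (H * Hᵀ).rank := by
  set U := span (ZMod 2) (Set.range H)
  set W := LinearMap.ker H.mulVecLin ⊓ U
  refine ⟨U.prod U, W.prod W, (span_range_inl_union_range_inr H H).symm,
    (symp_radical_prod_span_range H).symm, ?_⟩
  rw [Submodule.finrank_prod, Submodule.finrank_prod, rank_mul_transpose_eq_finrank_map,
    ← H.mulVecLin.finrank_map_add_finrank_ker_inf U]
  ring
end

section
/- Let S₀,I, S₀,E, S₀,G be subgroups of the Pauli group and suppose an error set E₂ is correctable for the code (S₀,I with gauge S₀,G and entanglement S₀,E), meaning every E ∈ E₂ lies in ⟨S_I, S_G⟩ ∪ (G_n \ Z(⟨S_I, S_E⟩)). Let S_I' be generated by S_I together with one element from each symplectic pair of S_G. Then every E ∈ E₂ lies in S_I' ∪ (G_n \ Z(⟨S_I', S_E⟩)); i.e., the error set correctable by the EAOQECC is contained in the error set correctable by the EAQECC obtained by absorbing half of each gauge pair into the isotropic group. -/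
open Matrix BigOperators

lemma symp_comm {n : ℕ} (v w : (Fin n → ZMod 2) × (Fin n → ZMod 2)) :
    symp v w = symp w v := by
  simp [symp, pdot, mul_comm, add_comm]

def sympL {n : ℕ} (u : (Fin n → ZMod 2) × (Fin n → ZMod 2)) :
    ((Fin n → ZMod 2) × (Fin n → ZMod 2)) →ₗ[ZMod 2] ZMod 2 where
  toFun w := symp w u
  map_add' a b := by
    simp [symp, pdot, add_mul, Finset.sum_add_distrib]; ring
  map_smul' c a := by
    simp [symp, pdot, Finset.mul_sum, mul_add, mul_assoc]

/-- Absorbing half of each gauge symplectic pair into the isotropic group: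
if every error in `E₂` is correctable for the EAOQECC `(S_I, S_E, S_G)`
(i.e. lies in `⟨S_I,S_G⟩` or outside the centralizer of `⟨S_I,S_E⟩`, expressed
symplectically: in `V_I ⊔ V_G` or non-orthogonal to some element of
`V_I ⊔ V_E`), then every error in `E₂` is correctable for the EAQECC
`(S_I\' = ⟨S_I, z_1,...,z_r⟩, S_E)`. -/
theorem eaoqecc_to_eaqecc_correctable (n r : ℕ)
    (VI VE : Submodule (ZMod 2) ((Fin n → ZMod 2) × (Fin n → ZMod 2)))
    (z x : Fin r → (Fin n → ZMod 2) × (Fin n → ZMod 2))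
    (hzz : ∀ i j, symp (z i) (z j) = 0)
    (hxx : ∀ i j, symp (x i) (x j) = 0)
    (hzx : ∀ i j, symp (z i) (x j) = if i = j then 1 else 0)
    (hVz : ∀ v ∈ VI, ∀ i, symp v (z i) = 0)
    (hVx : ∀ v ∈ VI, ∀ i, symp v (x i) = 0)
    (VG VI' : Submodule (ZMod 2) ((Fin n → ZMod 2) × (Fin n → ZMod 2)))
    (hVG : VG = Submodule.span (ZMod 2) (Set.range z ∪ Set.range x))
    (hVI' : VI' = VI ⊔ Submodule.span (ZMod 2) (Set.range z))
    (E₂ : Set ((Fin n → ZMod 2) × (Fin n → ZMod 2)))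
    (hE₂ : E₂ ⊆ ((VI ⊔ VG : Submodule (ZMod 2) _) : Set _) ∪
      {w | ∃ u ∈ (VI ⊔ VE : Submodule (ZMod 2) _), symp w u ≠ 0}) :
    E₂ ⊆ (VI' : Set _) ∪
      {w | ∃ u ∈ (VI' ⊔ VE : Submodule (ZMod 2) _), symp w u ≠ 0} := by
  -- VI' is orthogonal to each z j
  have hVI'z : ∀ w ∈ VI', ∀ j, symp w (z j) = 0 := by
    intro w hw j
    have : VI' ≤ LinearMap.ker (sympL (z j)) := by
      rw [hVI']
      apply sup_le
      · intro v hv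
        exact hVz v hv j
      · rw [Submodule.span_le]
        rintro _ ⟨i, rfl⟩
        exact hzz i j
    exact this hw
  intro E hE
  rcases hE₂ hE with hE1 | ⟨u, hu, hne⟩
  swap
  · right
    refine ⟨u, ?_, hne⟩
    refine Submodule.mem_sup.mpr ?_
    rcases Submodule.mem_sup.mp hu with ⟨a, ha, b, hb, rfl⟩
    exact ⟨a, by rw [hVI']; exact Submodule.mem_sup_left ha, b, hb, rfl⟩
  · -- E ∈ VI ⊔ VG
    rw [hVG, Submodule.span_union, ← sup_assoc, ← hVI'] at hE1
    rcases Submodule.mem_sup.mp hE1 with ⟨a, ha, b, hb, rfl⟩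
    rcases (Submodule.mem_span_range_iff_exists_fun (ZMod 2)).mp hb with ⟨c, rfl⟩
    by_cases hc : ∀ i, c i = 0
    · left
      have : (∑ i, c i • x i) = 0 := by
        simp [hc]
      rw [this, add_zero]
      exact ha
    · push_neg at hc
      obtain ⟨j, hj⟩ := hc
      right
      refine ⟨z j, Submodule.mem_sup_left (by
        rw [hVI']
        exact Submodule.mem_sup_right (Submodule.subset_span ⟨j, rfl⟩)), ?_⟩
      have key : symp (a + ∑ i, c i • x i) (z j) = c j := by
        have : symp (a + ∑ i, c i • x i) (z j)
            = sympL (z j) (a + ∑ i, c i • x i) := rfl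
        rw [this, map_add, map_sum]
        have ha0 : sympL (z j) a = 0 := hVI'z a ha j
        have hx0 : ∀ i, sympL (z j) (c i • x i) = c i * symp (x i) (z j) := by
          intro i; rw [_root_.map_smul]; rfl
        rw [ha0, zero_add]
        have : ∀ i, sympL (z j) (c i • x i) = if j = i then c i else 0 := by
          intro i
          rw [hx0, symp_comm, hzx]
          by_cases h : j = i <;> simp [h]
        rw [Finset.sum_congr rfl fun i _ => this i]
        simp
      rw [key]
      exact hj
end

section
/- Consider the 18×63 binary matrix H' consisting of the first 18 rows of the binary expansion H₂ of the parity check matrix of the primitive narrow-sense BCH code of length 63 and designed distance 9 over GF(2^6) (rows given by binary expansions of (1, α^j, α^{2j}, ...) for α, α³, α⁵). Then H' H'^T = 0 over GF(2), i.e., the [63,45] BCH code of designed distance 7 is dual-containing. -/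
open Polynomial Matrix BigOperators

/-- The defining polynomial `x⁶ + x + 1` of GF(2⁶) over GF(2). -/
noncomputable def bchPoly : (ZMod 2)[X] := X ^ 6 + X + 1

lemma bchPoly_monic : bchPoly.Monic := by
  unfold bchPoly
  rw [add_assoc]
  apply Polynomial.monic_X_pow_add
  apply lt_of_le_of_lt (Polynomial.degree_add_le _ _)
  rw [Polynomial.degree_X, Polynomial.degree_one]
  exact max_lt (by decide) (by decide)

/-- GF(2⁶), realized as GF(2)[x]/(x⁶+x+1), with primitive element `α` the class
of `x`, so `α⁶ + α + 1 = 0`. -/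
abbrev F64 := AdjoinRoot bchPoly

/-- The power basis `1, α, ..., α⁵` of GF(2⁶) over GF(2), giving the 6-bit
binary representation of field elements. -/
noncomputable def bchBasis : Module.Basis (Fin bchPoly.natDegree) (ZMod 2) F64 :=
  AdjoinRoot.powerBasisAux' bchPoly_monic

noncomputable def α : F64 := AdjoinRoot.root bchPoly

/-- The first 18 rows of the binary expansion of the BCH parity check matrix:
rows indexed by `(t,u)` with `t ∈ {0,1,2}` corresponding to `j = 2t+1 ∈
{1,3,5}` and `u` the bit position; the `(t,u),k` entry is the `u`-th bit of
`α^{jk}`. -/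
noncomputable def H' : Matrix (Fin 3 × Fin bchPoly.natDegree) (Fin 63) (ZMod 2) :=
  Matrix.of fun r k => bchBasis.repr (α ^ ((2 * (r.1 : ℕ) + 1) * (k : ℕ))) r.2

/-!
Every `GF(2)`-linear functional on `GF(2⁶)`, in particular each bit of the binary expansion, has
the form `x ↦ Tr(βx) = ∑ₐ (βx)^(2^a)` because the trace form is nondegenerate. Expanding the
product of two such functionals, an entry of `H' H'ᵀ` becomes a combination of geometric sums
`∑ₖ (α^(i 2^a + j 2^b))^k` over `k < 63`. Over `GF(2)`, `x⁶ + x + 1` is coprime to `x⁹ - 1` and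
to `x²¹ - 1`; so it has no factor of degree at most 3 (whose roots satisfy `r²¹ = 1`), and `α` has
order 63. Hence each sum vanishes unless `i 2^a + j 2^b ≡ 0 (mod 63)`, which never happens for
`i, j ∈ {1, 3, 5}`.
-/

open Finset Module

section CharTwo

-- The coefficients are Bézout certificates for `x⁶ + x + 1` against `x⁹ - 1` and `x²¹ - 1`.

variable {R : Type*} [CommRing R] [Nontrivial R] [CharP R 2] {r : R}

lemma pow_nine_ne_one_of_pow_six_add_add_one (hr : r ^ 6 + r + 1 = 0) : r ^ 9 ≠ 1 := by
  intro h
  refine one_ne_zero (α := R) ?_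
  linear_combination (norm := ring_nf) (r ^ 6 + r ^ 5 + r ^ 4 + r ^ 3 + r) * hr +
    (r ^ 3 + r ^ 2 + r + 1) * h
  simp [CharTwo.two_eq_zero]

lemma pow_twentyOne_ne_one_of_pow_six_add_add_one (hr : r ^ 6 + r + 1 = 0) : r ^ 21 ≠ 1 := by
  intro h
  refine one_ne_zero (α := R) ?_
  linear_combination (norm := ring_nf)
    (r ^ 20 + r ^ 19 + r ^ 18 + r ^ 16 + r ^ 12 + r ^ 11 + r ^ 10 + r ^ 7 + r ^ 4 + r ^ 2 + r) *
      hr + (r ^ 5 + r ^ 4 + r ^ 3 + r + 1) * h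
  simp [CharTwo.two_eq_zero]

end CharTwo

lemma bchPoly_natDegree : bchPoly.natDegree = 6 := by
  unfold bchPoly
  compute_degree!

lemma aeval_bchPoly {A : Type*} [CommRing A] [Algebra (ZMod 2) A] (r : A) :
    aeval r bchPoly = r ^ 6 + r + 1 := by
  simp [bchPoly]

lemma root_pow_six_add_add_one_of_dvd {p : (ZMod 2)[X]} (hp : p ∣ bchPoly) :
    AdjoinRoot.root p ^ 6 + AdjoinRoot.root p + 1 = 0 := by
  rw [← aeval_bchPoly, AdjoinRoot.aeval_eq, AdjoinRoot.mk_eq_zero.2 hp]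

lemma α_pow_six_add_add_one : α ^ 6 + α + 1 = 0 :=
  root_pow_six_add_add_one_of_dvd dvd_rfl

lemma AdjoinRoot.root_pow_card_pow_natDegree {K : Type*} [Field K] [Finite K] {p : K[X]}
    (hp : Irreducible p) : AdjoinRoot.root p ^ Nat.card K ^ p.natDegree = AdjoinRoot.root p := by
  have h := AdjoinRoot.mk_eq_zero.2 ((hp.natDegree_dvd_iff_dvd_X_pow_card_pow_sub_X).1 dvd_rfl)
  rwa [map_sub, map_pow, AdjoinRoot.mk_X, sub_eq_zero] at h

lemma bchPoly_irreducible : Irreducible bchPoly := by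
  have hne : bchPoly ≠ 1 := fun h => by simpa [h] using bchPoly_natDegree
  refine (bchPoly_monic.irreducible_iff_lt_natDegree_lt hne).2 fun q hq hdeg hdvd => ?_
  rw [bchPoly_natDegree, Finset.mem_Ioc] at hdeg
  obtain ⟨p, hp, hpq⟩ := WfDvdMonoid.exists_irreducible_factor
    (fun hu => by simp [natDegree_eq_zero_of_isUnit hu] at hdeg) hq.ne_zero
  have : Fact (Irreducible p) := ⟨hp⟩
  have : CharP (AdjoinRoot p) 2 := charP_of_injective_algebraMap' (ZMod 2) 2
  set r := AdjoinRoot.root p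
  have hr : r ^ 6 + r + 1 = 0 := root_pow_six_add_add_one_of_dvd (hpq.trans hdvd)
  have hr0 : r ≠ 0 := fun h => by simp [h] at hr
  -- `r` lies in `GF(2^d)` with `d ≤ 3`, so `r ^ (2^d - 1) = 1` and `2^d - 1 ∣ 21`
  have hfrob : r ^ (2 ^ p.natDegree - 1) = 1 := by
    have h := AdjoinRoot.root_pow_card_pow_natDegree hp
    rw [Nat.card_zmod, ← Nat.sub_add_cancel Nat.one_le_two_pow, pow_succ] at h
    exact mul_right_cancel₀ hr0 (h.trans (one_mul r).symm)
  have hdvd21 : 2 ^ p.natDegree - 1 ∣ 21 := by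
    have hd0 := hp.natDegree_pos
    have hd : p.natDegree ≤ 3 := (natDegree_le_of_dvd hpq hq.ne_zero).trans hdeg.2
    interval_cases p.natDegree <;> decide
  obtain ⟨c, hc⟩ := hdvd21
  exact pow_twentyOne_ne_one_of_pow_six_add_add_one hr (by rw [hc, pow_mul, hfrob, one_pow])

instance : Finite F64 :=
  have := Module.Finite.of_basis bchBasis
  Module.finite_of_finite (ZMod 2)

lemma finrank_F64 : finrank (ZMod 2) F64 = 6 := by
  rw [finrank_eq_card_basis bchBasis, Fintype.card_fin, bchPoly_natDegree]

lemma α_pow_sixtyThree : α ^ 63 = 1 := by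
  have : Fact (Irreducible bchPoly) := ⟨bchPoly_irreducible⟩
  have := Fintype.ofFinite F64
  have hcard : Fintype.card F64 = 64 := by
    rw [Module.card_fintype bchBasis, ZMod.card, Fintype.card_fin, bchPoly_natDegree]
    norm_num
  have hα : α ≠ 0 := fun h => by simpa [h] using α_pow_six_add_add_one
  simpa [hcard] using FiniteField.pow_card_sub_one_eq_one α hα

lemma orderOf_α : orderOf α = 63 := by
  have : Fact (Irreducible bchPoly) := ⟨bchPoly_irreducible⟩
  have : CharP F64 2 := charP_of_injective_algebraMap' (ZMod 2) 2
  have h63 : orderOf α ∈ Nat.divisors 63 :=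
    Nat.mem_divisors.2 ⟨orderOf_dvd_of_pow_eq_one α_pow_sixtyThree, by norm_num⟩
  have h9 : ¬ orderOf α ∣ 9 := fun h =>
    pow_nine_ne_one_of_pow_six_add_add_one α_pow_six_add_add_one (orderOf_dvd_iff_pow_eq_one.1 h)
  have h21 : ¬ orderOf α ∣ 21 := fun h => pow_twentyOne_ne_one_of_pow_six_add_add_one
    α_pow_six_add_add_one (orderOf_dvd_iff_pow_eq_one.1 h)
  have hdiv : ∀ d ∈ Nat.divisors 63, d ∣ 9 ∨ d ∣ 21 ∨ d = 63 := by decide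
  exact ((hdiv _ h63).resolve_left h9).resolve_left h21

lemma geom_sum_eq_zero_of_pow_eq_one {R : Type*} [CommRing R] [IsDomain R] {x : R} {n : ℕ}
    (hn : x ^ n = 1) (hx : x ≠ 1) : ∑ i ∈ range n, x ^ i = 0 :=
  (mul_eq_zero.1 (by rw [geom_sum_mul, hn, sub_self])).resolve_right (sub_ne_zero.2 hx)

section TraceDual

variable {K L : Type*} [Field K] [Field L] [Finite L] [Algebra K L]

lemma Module.Dual.exists_algebraMap_apply_eq_sum_pow (f : Module.Dual K L) :
    ∃ β : L, ∀ x, algebraMap K L (f x) = ∑ a ∈ range (finrank K L), (β * x) ^ Nat.card K ^ a := by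
  have : Finite K := _root_.Finite.of_injective _ (algebraMap K L).injective
  obtain ⟨β, rfl⟩ := (LinearMap.BilinForm.toDual _ (traceForm_nondegenerate K L)).surjective f
  exact ⟨β, fun x => FiniteField.algebraMap_trace_eq_sum_pow K L (β * x)⟩

theorem sum_dual_pow_mul_dual_pow_eq_zero (f g : Module.Dual K L) {α : L} {n i j : ℕ}
    (hn : α ^ n = 1)
    (h : ∀ a < finrank K L, ∀ b < finrank K L, α ^ (i * Nat.card K ^ a + j * Nat.card K ^ b) ≠ 1) :
    ∑ k ∈ range n, f (α ^ (i * k)) * g (α ^ (j * k)) = 0 := by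
  obtain ⟨β, hf⟩ := f.exists_algebraMap_apply_eq_sum_pow
  obtain ⟨γ, hg⟩ := g.exists_algebraMap_apply_eq_sum_pow
  set m := finrank K L
  set q := Nat.card K
  apply (algebraMap K L).injective
  calc algebraMap K L (∑ k ∈ range n, f (α ^ (i * k)) * g (α ^ (j * k)))
      = ∑ a ∈ range m, ∑ b ∈ range m,
          β ^ q ^ a * γ ^ q ^ b * ∑ k ∈ range n, (α ^ (i * q ^ a + j * q ^ b)) ^ k := by
        simp only [map_sum, map_mul, hf, hg, sum_mul, mul_sum]
        rw [sum_comm]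
        conv_rhs => rw [sum_comm]
        refine sum_congr rfl fun b _ => ?_
        rw [sum_comm]
        exact sum_congr rfl fun a _ => sum_congr rfl fun k _ => by ring
    _ = algebraMap K L 0 := by
        rw [map_zero]
        refine sum_eq_zero fun a ha => sum_eq_zero fun b hb => ?_
        rw [geom_sum_eq_zero_of_pow_eq_one (by rw [← pow_mul, mul_comm, pow_mul, hn, one_pow])
          (h a (mem_range.1 ha) b (mem_range.1 hb)), mul_zero]

end TraceDual

-- The union of the cyclotomic cosets of 1, 3, 5 modulo 63 is disjoint from its negative.
lemma not_sixtyThree_dvd_mul_two_pow_add_mul_two_pow (t t' : Fin 3) :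
    ∀ a < 6, ∀ b < 6, ¬ 63 ∣ (2 * (t : ℕ) + 1) * 2 ^ a + (2 * (t' : ℕ) + 1) * 2 ^ b := by
  revert t t'
  decide

/-- The binary expansion is 6 bits, `α` satisfies `α⁶ + α + 1 = 0`, and the
first 18 binary rows of the BCH parity check matrix satisfy `H' H'ᵀ = 0`:
the [63,45] BCH code of designed distance 7 is dual-containing. -/
theorem bch_63_45_dual_containing :
    bchPoly.natDegree = 6 ∧ α ^ 6 + α + 1 = 0 ∧ H' * H'ᵀ = 0 := by
  refine ⟨bchPoly_natDegree, α_pow_six_add_add_one, ?_⟩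
  have : Fact (Irreducible bchPoly) := ⟨bchPoly_irreducible⟩
  ext r s
  simp only [mul_apply, transpose_apply, H', of_apply, Matrix.zero_apply]
  rw [Fin.sum_univ_eq_sum_range (fun k => bchBasis.repr (α ^ ((2 * (r.1 : ℕ) + 1) * k)) r.2 *
    bchBasis.repr (α ^ ((2 * (s.1 : ℕ) + 1) * k)) s.2)]
  refine sum_dual_pow_mul_dual_pow_eq_zero (bchBasis.coord r.2) (bchBasis.coord s.2)
    α_pow_sixtyThree fun a ha b hb => ?_
  rw [finrank_F64] at ha hb
  rw [Nat.card_zmod, ne_eq, ← orderOf_dvd_iff_pow_eq_one, orderOf_α]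
  exact not_sixtyThree_dvd_mul_two_pow_add_mul_two_pow r.1 s.1 a ha b hb
end
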